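/- If G' is obtained from G by duplicating a vertex v (adding a new vertex v' adjacent to exactly the neighbours of v, but not to v itself), then q(G',x) = (1+x)·q(G,x) − x·q(G\v,x). -/

import Mathlib

/-- Local complementation at a vertex `v`: toggle all edges between
distinct neighbours of `v`. -/
def localComp {V : Type} (G : SimpleGraph V) (v : V) : SimpleGraph V where
  Adj x y := x ≠ y ∧ Xor' (G.Adj x y) (G.Adj v x ∧ G.Adj v y)
  symm := by
    constructor
    intro x y ⟨hxy, h⟩
    refine ⟨hxy.symm, ?_⟩
    rw [G.adj_comm y x, and_comm]
    exact h
  loopless := ⟨fun x h => h.1 rfl⟩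

/-- Edge local complementation on the edge `{u,v}`: `G*u*v*u`. -/
def elc {V : Type} (G : SimpleGraph V) (u v : V) : SimpleGraph V :=
  localComp (localComp (localComp G u) v) u

/-- Deletion of a vertex `u`: the induced subgraph on the other vertices. -/
def delVert {V : Type} (G : SimpleGraph V) (u : V) :
    SimpleGraph {w : V // w ≠ u} :=
  G.induce {w : V | w ≠ u}

/-- The graph `G` with the vertex `v` duplicated: the new vertex (`none`)
is adjacent to exactly the neighbours of `v`, but not to `v` itself. -/
def dupVertex {V : Type} (G : SimpleGraph V) (v : V) : SimpleGraph (Option V) where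
  Adj x y := match x, y with
    | some a, some b => G.Adj a b
    | some a, none => G.Adj v a
    | none, some b => G.Adj v b
    | none, none => False
  symm := by
    constructor
    rintro (_ | a) (_ | b) h
    · exact h.elim
    · exact h
    · exact h
    · exact G.adj_symm h
  loopless := by
    constructor
    rintro (_ | a) h
    · exact h.elim
    · exact G.irrefl h

/-!
Work inside one ambient graph and induct on a vertex set `s`, so that deleting vertices is
`Finset.erase` and deletions commute. Let `v, v'` be non-adjacent twins (`some v` and `none` in
`dupVertex G v`). If `v` has a neighbour `u`, expand `q` along the edge `uv`. Deleting `u` keeps the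
twins, so induction applies; in `G^{uv} \ u` the twin `v'` has become a pendant vertex at `v`, and a
pendant vertex `p` at `v` contributes `q(H \ p) + x q(H \ p \ v)`. The remaining terms cancel by the
exchange identity `q(G^{uv} \ u \ v) + q(G \ v) = q(G^{uv} \ u) + q(G \ u \ v)`. If `v` has no
neighbour, neither has `v'`, and each isolated vertex contributes a factor `x`.

Since `q` is only assumed to satisfy the recursion, its invariance under graph isomorphism has to be
proved first. Adjacency in `G^{uv}` is computed from the pivot formula `A + a_u a_vᵀ + a_v a_uᵀ`
(away from `u` and `v`) for the adjacency matrix `A` over `𝔽₂`.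
-/

open Finset Polynomial

section LocalComplementation

variable {V : Type} {G : SimpleGraph V}

theorem localComp_adj {c x y : V} :
    (localComp G c).Adj x y ↔ x ≠ y ∧ (G.Adj x y ↔ ¬ (G.Adj c x ∧ G.Adj c y)) :=
  and_congr_right' xor_iff_iff_not

/- `G.adjMatrix` with the classical instance built in, so that statements about `localComp G c`
and `elc G u v` need no `DecidableRel` arguments. -/
open Classical in
noncomputable def adjMatrixF2 (G : SimpleGraph V) : Matrix V V (ZMod 2) := G.adjMatrix (ZMod 2)

theorem adj_iff_adjMatrixF2_eq_one {x y : V} : G.Adj x y ↔ adjMatrixF2 G x y = 1 := by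
  by_cases h : G.Adj x y <;> simp [adjMatrixF2, h]

theorem adjMatrixF2_of_adj {x y : V} (h : G.Adj x y) : adjMatrixF2 G x y = 1 :=
  adj_iff_adjMatrixF2_eq_one.1 h

theorem adjMatrixF2_of_not_adj {x y : V} (h : ¬ G.Adj x y) : adjMatrixF2 G x y = 0 := by
  simp [adjMatrixF2, h]

theorem adjMatrixF2_self (x : V) : adjMatrixF2 G x x = 0 :=
  adjMatrixF2_of_not_adj G.irrefl

theorem adjMatrixF2_localComp {c x y : V} (h : x ≠ y) :
    adjMatrixF2 (localComp G c) x y =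
      adjMatrixF2 G x y + adjMatrixF2 G c x * adjMatrixF2 G c y := by
  by_cases h1 : G.Adj x y <;> by_cases h2 : G.Adj c x <;> by_cases h3 : G.Adj c y <;>
    simp [adjMatrixF2, localComp_adj, h, h1, h2, h3, CharTwo.add_self_eq_zero]

theorem adjMatrixF2_elc {u v x y : V} (huv : G.Adj u v) (hxu : x ≠ u) (hxv : x ≠ v)
    (hyu : y ≠ u) (hyv : y ≠ v) (hxy : x ≠ y) :
    adjMatrixF2 (elc G u v) x y = adjMatrixF2 G x y +
      adjMatrixF2 G u x * adjMatrixF2 G v y + adjMatrixF2 G v x * adjMatrixF2 G u y := by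
  simp only [elc, adjMatrixF2_localComp, hxy, huv.ne.symm, hxu.symm, hxv.symm, hyu.symm,
    hyv.symm, ne_eq, not_false_eq_true, adjMatrixF2_self, adjMatrixF2_of_adj huv,
    adjMatrixF2_of_adj huv.symm]
  ring_nf
  reduce_mod_char

theorem adjMatrixF2_elc_right {u v x : V} (huv : G.Adj u v) (hxu : x ≠ u) (hxv : x ≠ v) :
    adjMatrixF2 (elc G u v) v x = adjMatrixF2 G u x := by
  simp only [elc, adjMatrixF2_localComp, huv.ne, huv.ne.symm, hxu.symm, hxv.symm, ne_eq,
    not_false_eq_true, adjMatrixF2_self, adjMatrixF2_of_adj huv, adjMatrixF2_of_adj huv.symm]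
  ring_nf
  reduce_mod_char

theorem elc_adj_right_iff {u v x : V} (huv : G.Adj u v) (hxu : x ≠ u) (hxv : x ≠ v) :
    (elc G u v).Adj v x ↔ G.Adj u x := by
  rw [adj_iff_adjMatrixF2_eq_one, adj_iff_adjMatrixF2_eq_one, adjMatrixF2_elc_right huv hxu hxv]

theorem elc_adj_iff_of_not_adj {u v x y : V} (huv : G.Adj u v) (hxu : x ≠ u) (hxv : x ≠ v)
    (hyu : y ≠ u) (hyv : y ≠ v) (hux : ¬ G.Adj u x) (huy : ¬ G.Adj u y) :
    (elc G u v).Adj x y ↔ G.Adj x y := by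
  obtain rfl | hxy := eq_or_ne x y
  · exact iff_of_false (SimpleGraph.irrefl _) G.irrefl
  rw [adj_iff_adjMatrixF2_eq_one, adj_iff_adjMatrixF2_eq_one,
    adjMatrixF2_elc huv hxu hxv hyu hyv hxy, adjMatrixF2_of_not_adj hux,
    adjMatrixF2_of_not_adj huy, zero_mul, mul_zero, add_zero, add_zero]

theorem elc_not_adj_of_twin {u v v' x : V} (huv : G.Adj u v)
    (htwin : ∀ x, G.Adj v x ↔ G.Adj v' x) (hv'u : v' ≠ u) (hv'v : v' ≠ v) (hxu : x ≠ u)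
    (hxv : x ≠ v) : ¬ (elc G u v).Adj v' x := by
  obtain rfl | hv'x := eq_or_ne v' x
  · exact SimpleGraph.irrefl _
  have hrow : adjMatrixF2 G v' x = adjMatrixF2 G v x := by
    rw [adjMatrixF2, SimpleGraph.adjMatrix_apply, SimpleGraph.adjMatrix_apply, htwin x]
  have huv' : G.Adj u v' := ((htwin u).1 huv.symm).symm
  have hvv' : ¬ G.Adj v v' := fun h => G.irrefl ((htwin v').1 h)
  rw [adj_iff_adjMatrixF2_eq_one, adjMatrixF2_elc huv hv'u hv'v hxu hxv hv'x, hrow,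
    adjMatrixF2_of_adj huv', adjMatrixF2_of_not_adj hvv', one_mul, zero_mul, add_zero,
    CharTwo.add_self_eq_zero]
  exact zero_ne_one

theorem elc_elc_adj_iff {u v w x y : V} (huv : G.Adj u v) (huw : G.Adj u w) (hwv : w ≠ v)
    (hxu : x ≠ u) (hxv : x ≠ v) (hyu : y ≠ u) (hyv : y ≠ v) :
    (elc (elc G u v) v w).Adj x y ↔ (elc G u w).Adj x y := by
  have hwu : w ≠ u := huw.ne.symm
  have hvw : (elc G u v).Adj v w := (elc_adj_right_iff huv hwu hwv).2 huw
  obtain rfl | hxy := eq_or_ne x y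
  · exact iff_of_false (SimpleGraph.irrefl _) (SimpleGraph.irrefl _)
  have row_w : ∀ {z}, z ≠ u → z ≠ v → z ≠ w →
      ((elc (elc G u v) v w).Adj w z ↔ (elc G u w).Adj w z) := fun hzu hzv hzw => by
    rw [elc_adj_right_iff hvw hzv hzw, elc_adj_right_iff huv hzu hzv,
      elc_adj_right_iff huw hzu hzw]
  obtain rfl | hxw := eq_or_ne x w
  · exact row_w hyu hyv hxy.symm
  obtain rfl | hyw := eq_or_ne y w
  · rw [(elc (elc G u v) v _).adj_comm, (elc G u _).adj_comm]
    exact row_w hxu hxv hxy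
  rw [adj_iff_adjMatrixF2_eq_one, adj_iff_adjMatrixF2_eq_one]
  congr! 1
  rw [adjMatrixF2_elc hvw hxv hxw hyv hyw hxy, adjMatrixF2_elc huw hxu hxw hyu hyw hxy,
    adjMatrixF2_elc huv hxu hxv hyu hyv hxy, adjMatrixF2_elc huv hwu hwv hyu hyv hyw.symm,
    adjMatrixF2_elc huv hwu hwv hxu hxv hxw.symm, adjMatrixF2_elc_right huv hxu hxv,
    adjMatrixF2_elc_right huv hyu hyv, adjMatrixF2_of_adj huw]
  ring_nf
  reduce_mod_char

theorem localComp_not_adj_of_isolated {s : Finset V} {c w : V}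
    (hw : ∀ x ∈ s, ¬ G.Adj w x) (hc : c ∈ s) : ∀ x ∈ s, ¬ (localComp G c).Adj w x := by
  rintro x hx ⟨-, ⟨hwx, -⟩ | ⟨⟨hcw, -⟩, -⟩⟩
  · exact hw x hx hwx
  · exact hw c hc hcw.symm

theorem elc_not_adj_of_isolated {s : Finset V} {u v w : V}
    (hw : ∀ x ∈ s, ¬ G.Adj w x) (hu : u ∈ s) (hv : v ∈ s) : ∀ x ∈ s, ¬ (elc G u v).Adj w x :=
  localComp_not_adj_of_isolated
    (localComp_not_adj_of_isolated (localComp_not_adj_of_isolated hw hu) hv) hu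

namespace SimpleGraph.Iso

variable {W : Type} {H : SimpleGraph W}

def localComp (e : G ≃g H) (c : V) : _root_.localComp G c ≃g _root_.localComp H (e c) where
  toEquiv := e.toEquiv
  map_rel_iff' := by simp [localComp_adj, e.map_adj_iff]

def elc (e : G ≃g H) (u v : V) : _root_.elc G u v ≃g _root_.elc H (e u) (e v) :=
  ((e.localComp u).localComp v).localComp u

def delVert (e : G ≃g H) (u : V) : _root_.delVert G u ≃g _root_.delVert H (e u) :=
  e.induce ⟨fun _ hx => e.injective.ne hx, e.injective.injOn,
    fun y hy => ⟨e.symm y, fun h => hy (by simp [← h]), by simp⟩⟩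

end SimpleGraph.Iso

theorem localComp_induce (s : Set V) (c : s) :
    localComp (G.induce s) c = (localComp G c).induce s := by
  ext x y
  simp [localComp_adj, Subtype.ext_iff]

theorem elc_induce (s : Set V) (u v : s) : elc (G.induce s) u v = (elc G u v).induce s := by
  simp only [elc, localComp_induce]

def induceEraseIso [DecidableEq V] (G : SimpleGraph V) (s : Finset V) (u : s) :
    delVert (G.induce s) u ≃g G.induce (s.erase u : Set V) where
  toFun x := ⟨x.1, mem_erase.2 ⟨fun h => x.2 (Subtype.ext h), x.1.2⟩⟩
  invFun x := ⟨⟨x, mem_of_mem_erase x.2⟩, fun h => ne_of_mem_erase x.2 (congrArg Subtype.val h)⟩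
  left_inv _ := rfl
  right_inv _ := rfl
  map_rel_iff' := Iff.rfl

end LocalComplementation

variable (q : ∀ (W : Type) [Fintype W] [DecidableEq W], SimpleGraph W → ℤ[X])

structure IsInterlacePoly : Prop where
  bot_eq : ∀ (W : Type) [Fintype W] [DecidableEq W], q W ⊥ = X ^ Fintype.card W
  rec_eq : ∀ (W : Type) [Fintype W] [DecidableEq W] (G : SimpleGraph W) (u v : W), G.Adj u v →
    q W G = q {w : W // w ≠ u} (delVert G u) + q {w : W // w ≠ u} (delVert (elc G u v) u)

def qOn {V : Type} [DecidableEq V] (G : SimpleGraph V) (s : Finset V) : ℤ[X] :=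
  q s (G.induce s)

variable {q}

section qOn

variable {V : Type} [DecidableEq V] {G : SimpleGraph V} {s : Finset V}

theorem qOn_congr {H : SimpleGraph V} (h : ∀ x ∈ s, ∀ y ∈ s, G.Adj x y ↔ H.Adj x y) :
    qOn q G s = qOn q H s := by
  have : G.induce s = H.induce s := by
    ext x y
    exact h x x.2 y y.2
  rw [qOn, qOn, this]

theorem qOn_elc_of_pendant {u v : V} (huv : G.Adj u v) (hpend : ∀ x ∈ s, G.Adj u x ↔ x = v) :
    qOn q (elc G u v) ((s.erase u).erase v) = qOn q G ((s.erase u).erase v) := by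
  refine qOn_congr fun x hx y hy => ?_
  simp only [mem_erase] at hx hy
  exact elc_adj_iff_of_not_adj huv hx.2.1 hx.1 hy.2.1 hy.1
    (fun h => hx.1 ((hpend x hx.2.2).1 h)) (fun h => hy.1 ((hpend y hy.2.2).1 h))

end qOn

namespace IsInterlacePoly

theorem eq_of_iso (hq : IsInterlacePoly q) {A B : Type} [Fintype A] [DecidableEq A] [Fintype B]
    [DecidableEq B] {G : SimpleGraph A} {H : SimpleGraph B} (e : G ≃g H) : q A G = q B H := by
  induction hn : Fintype.card A using Nat.strong_induction_on generalizing A B with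
  | _ n ih =>
  by_cases hG : G = ⊥
  · have hH : H = ⊥ := by
      ext x y
      simpa [hG] using e.symm.map_adj_iff (v := x) (w := y)
    subst hG hH
    rw [hq.bot_eq, hq.bot_eq, Fintype.card_congr e.toEquiv]
  · obtain ⟨u, v, huv⟩ : ∃ u v, G.Adj u v := by
      by_contra! h
      exact hG (SimpleGraph.eq_bot_iff_forall_not_adj.2 h)
    have hcard : Fintype.card {w // w ≠ u} < n := hn ▸ Fintype.card_subtype_lt (x := u) (by simp)
    rw [hq.rec_eq A G u v huv, hq.rec_eq B H (e u) (e v) (e.map_adj_iff.2 huv)]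
    congr 1
    · exact ih _ hcard (e.delVert u) rfl
    · exact ih _ hcard ((e.elc u v).delVert u) rfl

variable (hq : IsInterlacePoly q) {V : Type} [DecidableEq V] {G : SimpleGraph V} {s : Finset V}
include hq

theorem qOn_eq_of_adj {u v : V} (hu : u ∈ s) (hv : v ∈ s) (huv : G.Adj u v) :
    qOn q G s = qOn q G (s.erase u) + qOn q (elc G u v) (s.erase u) := by
  rw [qOn, hq.rec_eq _ _ ⟨u, hu⟩ ⟨v, hv⟩ huv, elc_induce]
  congr 1 <;> exact hq.eq_of_iso (induceEraseIso _ _ _)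

theorem qOn_of_forall_not_adj (h : ∀ x ∈ s, ∀ y ∈ s, ¬ G.Adj x y) : qOn q G s = X ^ #s := by
  have : G.induce s = ⊥ := by
    ext x y
    simpa using h x x.2 y y.2
  rw [qOn, this, hq.bot_eq, Fintype.card_coe]

theorem qOn_of_isolated {w : V} (hw : w ∈ s) (hiso : ∀ x ∈ s, ¬ G.Adj w x) :
    qOn q G s = X * qOn q G (s.erase w) := by
  induction s using Finset.strongInduction generalizing G with
  | H s ih =>
  by_cases hE : ∃ p ∈ s, ∃ z ∈ s, G.Adj p z
  · obtain ⟨p, hp, z, hz, hpz⟩ := hE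
    have hpw : p ≠ w := by rintro rfl; exact hiso z hz hpz
    have hzw : z ≠ w := by rintro rfl; exact hiso p hp hpz.symm
    have hw' : w ∈ s.erase p := mem_erase.2 ⟨hpw.symm, hw⟩
    have hiso' := elc_not_adj_of_isolated hiso hp hz
    rw [hq.qOn_eq_of_adj hp hz hpz,
      hq.qOn_eq_of_adj (mem_erase.2 ⟨hpw, hp⟩) (mem_erase.2 ⟨hzw, hz⟩) hpz,
      ih _ (erase_ssubset hp) hw' (fun x hx => hiso x (mem_of_mem_erase hx)),
      ih _ (erase_ssubset hp) hw' (fun x hx => hiso' x (mem_of_mem_erase hx)),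
      erase_right_comm, mul_add]
  · push Not at hE
    rw [hq.qOn_of_forall_not_adj hE, hq.qOn_of_forall_not_adj fun x hx y hy =>
      hE x (mem_of_mem_erase hx) y (mem_of_mem_erase hy), ← pow_succ', card_erase_add_one hw]

theorem qOn_elc_erase_of_pendant {u v : V} (hv : v ∈ s) (hpend : ∀ x ∈ s, G.Adj u x ↔ x = v) :
    qOn q (elc G u v) (s.erase u) = X * qOn q G ((s.erase u).erase v) := by
  have huv : G.Adj u v := (hpend v hv).2 rfl
  have hiso : ∀ x ∈ s.erase u, ¬ (elc G u v).Adj v x := by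
    intro x hx h
    obtain ⟨hxu, hxs⟩ := mem_erase.1 hx
    obtain rfl | hxv := eq_or_ne x v
    · exact SimpleGraph.irrefl _ h
    · exact hxv ((hpend x hxs).1 ((elc_adj_right_iff huv hxu hxv).1 h))
  rw [hq.qOn_of_isolated (mem_erase.2 ⟨huv.ne.symm, hv⟩) hiso, qOn_elc_of_pendant huv hpend]

theorem qOn_of_pendant {u v : V} (hu : u ∈ s) (hv : v ∈ s)
    (hpend : ∀ x ∈ s, G.Adj u x ↔ x = v) :
    qOn q G s = qOn q G (s.erase u) + X * qOn q G ((s.erase u).erase v) := by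
  rw [hq.qOn_eq_of_adj hu hv ((hpend v hv).2 rfl), hq.qOn_elc_erase_of_pendant hv hpend]

/- Expand `q(G^{uv} \ u)` along `vw` and `q(G \ v)` along `uw` for a second neighbour `w` of `u`:
`(G^{uv})^{vw}` and `G^{uw}` agree away from `u` and `v`. -/
theorem qOn_elc_exchange {u v : V} (hu : u ∈ s) (hv : v ∈ s) (huv : G.Adj u v) :
    qOn q (elc G u v) ((s.erase u).erase v) + qOn q G (s.erase v) =
      qOn q (elc G u v) (s.erase u) + qOn q G ((s.erase u).erase v) := by
  have hvu : v ≠ u := huv.ne.symm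
  by_cases hw : ∃ w ∈ s, w ≠ v ∧ G.Adj u w
  · obtain ⟨w, hw, hwv, huw⟩ := hw
    have hwu : w ≠ u := huw.ne.symm
    have hvw : (elc G u v).Adj v w := (elc_adj_right_iff huv hwu hwv).2 huw
    rw [hq.qOn_eq_of_adj (mem_erase.2 ⟨hvu, hv⟩) (mem_erase.2 ⟨hwu, hw⟩) hvw,
      hq.qOn_eq_of_adj (mem_erase.2 ⟨huv.ne, hu⟩) (mem_erase.2 ⟨hwv, hw⟩) huw,
      qOn_congr (G := elc (elc G u v) v w) (H := elc G u w) fun x hx y hy => by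
        simp only [mem_erase] at hx hy
        exact elc_elc_adj_iff huv huw hwv hx.2.1 hx.1 hy.2.1 hy.1,
      erase_right_comm (s := s) (a := v)]
    ring
  · push Not at hw
    have hpend : ∀ x ∈ s, G.Adj u x ↔ x = v := fun x hx =>
      ⟨fun h => by_contra fun hxv => hw x hx hxv h, by rintro rfl; exact huv⟩
    have hiso : ∀ x ∈ s.erase v, ¬ G.Adj u x := fun x hx h =>
      ne_of_mem_erase hx ((hpend x (mem_of_mem_erase hx)).1 h)
    rw [hq.qOn_elc_erase_of_pendant hv hpend, qOn_elc_of_pendant huv hpend,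
      hq.qOn_of_isolated (mem_erase.2 ⟨huv.ne, hu⟩) hiso, erase_right_comm (s := s) (a := v)]
    ring

theorem qOn_of_twins {v v' : V} (hv : v ∈ s) (hv' : v' ∈ s) (hne : v ≠ v')
    (htwin : ∀ x, G.Adj v x ↔ G.Adj v' x) :
    qOn q G s = (1 + X) * qOn q G (s.erase v') - X * qOn q G ((s.erase v').erase v) := by
  induction s using Finset.strongInduction with
  | H s ih =>
  by_cases hnb : ∃ u ∈ s, G.Adj u v
  · obtain ⟨u, hu, huv⟩ := hnb
    have huv' : G.Adj u v' := ((htwin u).1 huv.symm).symm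
    have hvu : v ≠ u := huv.ne.symm
    have hv'u : v' ≠ u := huv'.ne.symm
    have hleaf : ∀ x ∈ s.erase u, (elc G u v).Adj v' x ↔ x = v := by
      intro x hx
      obtain rfl | hxv := eq_or_ne x v
      · exact iff_of_true ((elc_adj_right_iff huv hv'u hne.symm).2 huv').symm rfl
      · exact iff_of_false
          (elc_not_adj_of_twin huv htwin hv'u hne.symm (ne_of_mem_erase hx) hxv) hxv
    have hrec := hq.qOn_eq_of_adj hu hv huv
    have hIH := ih _ (erase_ssubset hu) (mem_erase.2 ⟨hvu, hv⟩) (mem_erase.2 ⟨hv'u, hv'⟩)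
    have hpend := hq.qOn_of_pendant (mem_erase.2 ⟨hv'u, hv'⟩) (mem_erase.2 ⟨hvu, hv⟩) hleaf
    have hrec' := hq.qOn_eq_of_adj (mem_erase.2 ⟨hv'u.symm, hu⟩) (mem_erase.2 ⟨hne, hv⟩) huv
    have hexch := hq.qOn_elc_exchange (mem_erase.2 ⟨hv'u.symm, hu⟩) (mem_erase.2 ⟨hne, hv⟩) huv
    rw [erase_right_comm (s := s) (a := u)] at hIH hpend
    linear_combination hrec + hIH + hpend - (1 + X) * hrec' + X * hexch
  · push Not at hnb
    have hiso : ∀ x ∈ s, ¬ G.Adj v x := fun x hx h => hnb x hx h.symm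
    rw [hq.qOn_of_isolated hv' fun x hx h => hiso x hx ((htwin x).2 h),
      hq.qOn_of_isolated (mem_erase.2 ⟨hne, hv⟩) fun x hx => hiso x (mem_of_mem_erase hx)]
    ring

theorem qOn_univ [Fintype V] : qOn q G univ = q V G :=
  hq.eq_of_iso { toEquiv := Equiv.subtypeUnivEquiv mem_univ, map_rel_iff' := Iff.rfl }

theorem qOn_univ_erase [Fintype V] (v : V) :
    qOn q G (univ.erase v) = q {w // w ≠ v} (delVert G v) :=
  hq.eq_of_iso { toEquiv := Equiv.subtypeEquivRight (by simp), map_rel_iff' := Iff.rfl }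

theorem qOn_map {W : Type} [DecidableEq W] {H : SimpleGraph W} (f : G ↪g H) :
    qOn q H (s.map f.toEmbedding) = qOn q G s :=
  (hq.eq_of_iso
    { toEquiv := (Equiv.Set.image f s f.injective).trans (Equiv.setCongr (coe_map _ _).symm)
      map_rel_iff' := f.map_adj_iff }).symm

end IsInterlacePoly

def dupVertexEmbedding {V : Type} (G : SimpleGraph V) (v : V) : G ↪g dupVertex G v where
  toEmbedding := Function.Embedding.some
  map_rel_iff' := Iff.rfl

theorem dupVertex_adj_some_iff_adj_none {V : Type} (G : SimpleGraph V) (v : V) (x : Option V) :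
    (dupVertex G v).Adj (some v) x ↔ (dupVertex G v).Adj none x := by
  cases x
  · exact iff_of_false G.irrefl id
  · exact Iff.rfl

/-- Duplicating a vertex `v` transforms the interlace polynomial by
`q(G') = (1+x)·q(G) − x·q(G\v)`. -/
theorem interlace_q_dupVertex
    (q : ∀ (W : Type) [Fintype W] [DecidableEq W], SimpleGraph W → Polynomial ℤ)
    (hbase : ∀ (W : Type) [Fintype W] [DecidableEq W],
      q W (⊥ : SimpleGraph W) = Polynomial.X ^ (Fintype.card W))
    (hrec : ∀ (W : Type) [Fintype W] [DecidableEq W] (G : SimpleGraph W)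
      (u v : W), G.Adj u v →
      q W G = q {w : W // w ≠ u} (delVert G u) + q {w : W // w ≠ u} (delVert (elc G u v) u))
    {V : Type} [Fintype V] [DecidableEq V] (G : SimpleGraph V) (v : V) :
    q (Option V) (dupVertex G v)
      = (1 + Polynomial.X) * q V G
        - Polynomial.X * q {w : V // w ≠ v} (delVert G v) := by
  have hq : IsInterlacePoly q := ⟨hbase, hrec⟩
  let e := (dupVertexEmbedding G v).toEmbedding
  have hnone : univ.erase none = univ.map e := by
    ext (_ | x) <;> simp [e, dupVertexEmbedding]
  have hsome : (univ.map e).erase (some v) = (univ.erase v).map e := (map_erase e _ v).symm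
  have key := hq.qOn_of_twins (mem_univ (some v)) (mem_univ none) (Option.some_ne_none v)
    (dupVertex_adj_some_iff_adj_none G v)
  rwa [hq.qOn_univ, hnone, hq.qOn_map, hq.qOn_univ, hsome, hq.qOn_map, hq.qOn_univ_erase] at key
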